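/- Let δ ≥ 0, p ∈ (1,∞), and S(A) = (δ + |A^sym|)^(p-2) A^sym, F(A) = (δ + |A^sym|)^((p-2)/2) A^sym for d×d matrices. If δ > 0 and p ≥ 2, then there is a constant c > 0 depending only on p such that for all d×d matrices A, B: δ^(p-2) |A^sym - B^sym|² ≤ c |F(A) - F(B)|². -/

import Mathlib

open Matrix in
/-- Symmetric part of a square matrix. -/
noncomputable def msym {d : ℕ} (A : Matrix (Fin d) (Fin d) ℝ) : Matrix (Fin d) (Fin d) ℝ :=
  (1/2 : ℝ) • (A + Aᵀ)

/-- Frobenius norm of a matrix. -/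
noncomputable def frob {d : ℕ} (A : Matrix (Fin d) (Fin d) ℝ) : ℝ :=
  Real.sqrt (∑ i, ∑ j, (A i j) ^ 2)

/-- Frobenius inner product of two matrices. -/
noncomputable def frobInner {d : ℕ} (A B : Matrix (Fin d) (Fin d) ℝ) : ℝ :=
  ∑ i, ∑ j, A i j * B i j

/-- The extra-stress tensor `S(A) = (δ + |A^sym|)^(p-2) A^sym` (with `ν₀ = 1`). -/
noncomputable def Smap (δ p : ℝ) {d : ℕ} (A : Matrix (Fin d) (Fin d) ℝ) :
    Matrix (Fin d) (Fin d) ℝ :=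
  ((δ + frob (msym A)) ^ (p - 2)) • msym A

/-- The nonlinear quantity `F(A) = (δ + |A^sym|)^((p-2)/2) A^sym`. -/
noncomputable def Fmap (δ p : ℝ) {d : ℕ} (A : Matrix (Fin d) (Fin d) ℝ) :
    Matrix (Fin d) (Fin d) ℝ :=
  ((δ + frob (msym A)) ^ ((p - 2) / 2)) • msym A

/-!
With `α = (p - 2)/2 ≥ 0` and `a = A^sym`, `F(A) = φ(|a|) a` for the nondecreasing weight
`φ(r) = (δ + r)^α ≥ δ^α`. Since `r ↦ (φ(r) - δ^α) r` is nondecreasing, `a ↦ (φ(|a|) - δ^α) a` is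
a monotone map, hence `δ^α |a - b|² ≤ ⟨F(A) - F(B), a - b⟩ ≤ |F(A) - F(B)| |a - b|`; squaring
gives the claim with `c = 1`.
-/

open Set RealInnerProductSpace

section InnerProductSpace

variable {E : Type*} [NormedAddCommGroup E] [InnerProductSpace ℝ E]

lemma inner_smul_sub_smul_sub_nonneg {x y : ℝ} (hx : 0 ≤ x) (hy : 0 ≤ y) {a b : E}
    (h : 0 ≤ (x * ‖a‖ - y * ‖b‖) * (‖a‖ - ‖b‖)) : 0 ≤ ⟪x • a - y • b, a - b⟫ := by
  have hab : ⟪a, b⟫ ≤ ‖a‖ * ‖b‖ := real_inner_le_norm a b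
  have hexpand : ⟪x • a - y • b, a - b⟫ = x * ‖a‖ ^ 2 + y * ‖b‖ ^ 2 - (x + y) * ⟪a, b⟫ := by
    simp only [inner_sub_left, inner_sub_right, real_inner_smul_left, real_inner_self_eq_norm_sq,
      real_inner_comm a b]
    ring
  rw [hexpand]
  nlinarith [mul_le_mul_of_nonneg_left hab (add_nonneg hx hy)]

lemma mul_norm_sub_le_norm_smul_sub_smul {φ : ℝ → ℝ} {m : ℝ} (hφm : ∀ r, 0 ≤ r → m ≤ φ r)
    (hφ : MonotoneOn φ (Ici 0)) (a b : E) :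
    m * ‖a - b‖ ≤ ‖φ ‖a‖ • a - φ ‖b‖ • b‖ := by
  set X := φ ‖a‖ • a - φ ‖b‖ • b
  have hx : 0 ≤ φ ‖a‖ - m := sub_nonneg.2 (hφm _ (norm_nonneg a))
  have hy : 0 ≤ φ ‖b‖ - m := sub_nonneg.2 (hφm _ (norm_nonneg b))
  -- `r ↦ (φ r - m) r` is monotone on `[0, ∞)`, being a product of nonnegative monotone factors
  have hcross : 0 ≤ ((φ ‖a‖ - m) * ‖a‖ - (φ ‖b‖ - m) * ‖b‖) * (‖a‖ - ‖b‖) := by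
    rcases le_total ‖a‖ ‖b‖ with h | h
    · have hφab := hφ (norm_nonneg a) (norm_nonneg b) h
      exact mul_nonneg_of_nonpos_of_nonpos
        (sub_nonpos.2 (mul_le_mul (by linarith) h (norm_nonneg a) hy)) (by linarith)
    · have hφba := hφ (norm_nonneg b) (norm_nonneg a) h
      exact mul_nonneg (sub_nonneg.2 (mul_le_mul (by linarith) h (norm_nonneg b) hx))
        (by linarith)
  have hdecomp : X = m • (a - b) + ((φ ‖a‖ - m) • a - (φ ‖b‖ - m) • b) := by
    simp only [X, smul_sub, sub_smul]
    abel
  have hinner : m * ‖a - b‖ ^ 2 ≤ ⟪X, a - b⟫ := by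
    rw [hdecomp, inner_add_left, real_inner_smul_left, real_inner_self_eq_norm_sq]
    linarith [inner_smul_sub_smul_sub_nonneg hx hy hcross]
  rcases (norm_nonneg (a - b)).eq_or_lt with h0 | hpos
  · rw [← h0, mul_zero]
    exact norm_nonneg X
  · refine le_of_mul_le_mul_right ?_ hpos
    calc m * ‖a - b‖ * ‖a - b‖ = m * ‖a - b‖ ^ 2 := by ring
      _ ≤ ⟪X, a - b⟫ := hinner
      _ ≤ ‖X‖ * ‖a - b‖ := real_inner_le_norm X (a - b)

end InnerProductSpace

section Frobenius

variable {d : ℕ}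

noncomputable def frobVec : Matrix (Fin d) (Fin d) ℝ →ₗ[ℝ] EuclideanSpace ℝ (Fin d × Fin d) where
  toFun A := WithLp.toLp 2 fun ij => A ij.1 ij.2
  map_add' _ _ := rfl
  map_smul' _ _ := rfl

lemma frob_eq_norm_frobVec (A : Matrix (Fin d) (Fin d) ℝ) : frob A = ‖frobVec A‖ := by
  simp only [frob, EuclideanSpace.norm_eq, Real.norm_eq_abs, sq_abs, Fintype.sum_prod_type]
  rfl

lemma frobVec_Fmap (δ p : ℝ) (A : Matrix (Fin d) (Fin d) ℝ) :
    frobVec (Fmap δ p A) =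
      (δ + ‖frobVec (msym A)‖) ^ ((p - 2) / 2) • frobVec (msym A) := by
  rw [Fmap, map_smul, frob_eq_norm_frobVec]

end Frobenius

/-- lower coercivity bound for the F-distance in the case `δ > 0`, `p ≥ 2`:
`δ^(p-2) |A^sym - B^sym|² ≤ c |F(A) - F(B)|²`, with `c` depending only on `p`. -/
theorem coercivity_F_distance (p : ℝ) (hp : 2 ≤ p) :
    ∃ c : ℝ, 0 < c ∧
      ∀ (δ : ℝ), 0 < δ → ∀ (d : ℕ) (A B : Matrix (Fin d) (Fin d) ℝ),
        δ ^ (p - 2) * frob (msym A - msym B) ^ 2 ≤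
          c * frob (Fmap δ p A - Fmap δ p B) ^ 2 := by
  refine ⟨1, one_pos, fun δ hδ d A B => ?_⟩
  have hα : 0 ≤ (p - 2) / 2 := by linarith
  have key := mul_norm_sub_le_norm_smul_sub_smul (φ := fun r => (δ + r) ^ ((p - 2) / 2))
    (fun r hr => Real.rpow_le_rpow hδ.le (by linarith) hα)
    (fun s hs t _ hst => Real.rpow_le_rpow (by linarith [mem_Ici.1 hs]) (by linarith) hα)
    (frobVec (msym A)) (frobVec (msym B))
  have hδsq : δ ^ (p - 2) = (δ ^ ((p - 2) / 2)) ^ 2 := by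
    rw [← Real.rpow_natCast, ← Real.rpow_mul hδ.le]
    norm_num
  rw [frob_eq_norm_frobVec, frob_eq_norm_frobVec, map_sub, map_sub, frobVec_Fmap, frobVec_Fmap,
    one_mul, hδsq, ← mul_pow]
  exact pow_le_pow_left₀ (by positivity) key 2
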